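/- arXiv:1304.7531 — 4 statements merged into one kernel-verified Lean document; each statement's English description precedes it below -/
import Mathlib

section
/- Let h : [0,∞) → [0,∞) be nonincreasing and integrable, and let μ be a locally finite Borel measure on [0,∞) satisfying μ([0,σ]) ≤ ℓ·(1+σ) for all σ ≥ 0, where ℓ > 0. Then for every s ≥ 0, ∫_{[0,∞)} h(s+σ) dμ(σ) ≤ ℓ·h(s) + ℓ·∫_s^∞ h(u) du. -/
/-!
Write `g σ = h (s + σ)`. By the layer-cake formula, `∫ g dμ = ∫_{t > 0} μ S_t` where
`S_t = {σ ≥ 0 | t < g σ}`. Since `g` is antitone, `S_t` is an initial segment of `[0, ∞)`, so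
`S_t ⊆ [0, |S_t|]` and `μ S_t ≤ ℓ (1 + |S_t|)`; moreover `S_t = ∅` once `t ≥ g 0`. Integrating
in `t`, the constant contributes `ℓ g(0) = ℓ h(s)`, and `∫_{t > 0} |S_t| dt = ∫_0^∞ g` by the
layer-cake formula for Lebesgue measure.
-/

open MeasureTheory Set

lemma measure_le_ofReal_mul_one_add_volume {μ : Measure ℝ} {ℓ : ℝ} (hℓ : 0 < ℓ)
    (hμ : ∀ σ : ℝ, 0 ≤ σ → μ (Icc 0 σ) ≤ ENNReal.ofReal (ℓ * (1 + σ)))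
    {S : Set ℝ} (hS_nonneg : S ⊆ Ici 0) (hS : ∀ σ ∈ S, Icc 0 σ ⊆ S) :
    μ S ≤ ENNReal.ofReal ℓ * (1 + volume S) := by
  rcases eq_or_ne (volume S) ⊤ with hinf | hfin
  · simp [hinf, hℓ]
  have hS_sub : S ⊆ Icc 0 (volume S).toReal := by
    intro σ hσ
    have hσ0 : 0 ≤ σ := hS_nonneg hσ
    refine ⟨hσ0, (ENNReal.ofReal_le_iff_le_toReal hfin).1 ?_⟩
    calc ENNReal.ofReal σ = volume (Icc 0 σ) := by rw [Real.volume_Icc, sub_zero]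
      _ ≤ volume S := measure_mono (hS σ hσ)
  calc μ S ≤ μ (Icc 0 (volume S).toReal) := measure_mono hS_sub
    _ ≤ ENNReal.ofReal (ℓ * (1 + (volume S).toReal)) := hμ _ ENNReal.toReal_nonneg
    _ = ENNReal.ofReal ℓ * (1 + volume S) := by
      rw [ENNReal.ofReal_mul hℓ.le, ENNReal.ofReal_add zero_le_one ENNReal.toReal_nonneg,
        ENNReal.ofReal_one, ENNReal.ofReal_toReal hfin]

lemma setLIntegral_Ici_le_of_antitoneOn {μ : Measure ℝ} {ℓ : ℝ} (hℓ : 0 < ℓ)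
    (hμ : ∀ σ : ℝ, 0 ≤ σ → μ (Icc 0 σ) ≤ ENNReal.ofReal (ℓ * (1 + σ)))
    {g : ℝ → ℝ} (hg_nonneg : ∀ σ, 0 ≤ σ → 0 ≤ g σ) (hg : AntitoneOn g (Ici 0)) :
    ∫⁻ σ in Ici 0, ENNReal.ofReal (g σ) ∂μ ≤
      ENNReal.ofReal ℓ * (ENNReal.ofReal (g 0) + ∫⁻ σ in Ici 0, ENNReal.ofReal (g σ)) := by
  set S : ℝ → Set ℝ := fun t => {σ | t < g σ} ∩ Ici 0
  have layer_cake (ν : Measure ℝ) :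
      ∫⁻ σ in Ici 0, ENNReal.ofReal (g σ) ∂ν = ∫⁻ t in Ioi 0, ν (S t) := by
    rw [lintegral_eq_lintegral_meas_lt _
      ((ae_restrict_iff' measurableSet_Ici).2 (.of_forall hg_nonneg))
      (aemeasurable_restrict_of_antitoneOn measurableSet_Ici hg)]
    simp only [Measure.restrict_apply' measurableSet_Ici, S]
  have level_bound (t : ℝ) :
      μ (S t) ≤ ENNReal.ofReal ℓ * ((Iio (g 0)).indicator 1 t + volume (S t)) := by
    by_cases ht : t < g 0
    · rw [indicator_of_mem (mem_Iio.2 ht), Pi.one_apply]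
      refine measure_le_ofReal_mul_one_add_volume hℓ hμ inter_subset_right ?_
      rintro σ ⟨hσt, hσ0⟩ τ ⟨hτ0, hτσ⟩
      exact ⟨hσt.trans_le (hg hτ0 hσ0 hτσ), hτ0⟩
    · have hS_empty : S t = ∅ := eq_empty_of_forall_notMem fun σ ⟨hσt, hσ0⟩ =>
        ht (hσt.trans_le (hg self_mem_Ici hσ0 hσ0))
      simp [hS_empty]
  calc ∫⁻ σ in Ici 0, ENNReal.ofReal (g σ) ∂μ = ∫⁻ t in Ioi 0, μ (S t) := layer_cake μ
    _ ≤ ∫⁻ t in Ioi 0, ENNReal.ofReal ℓ * ((Iio (g 0)).indicator 1 t + volume (S t)) :=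
      lintegral_mono level_bound
    _ = ENNReal.ofReal ℓ * (volume (Ioo 0 (g 0)) + ∫⁻ t in Ioi 0, volume (S t)) := by
      rw [lintegral_const_mul' _ _ ENNReal.ofReal_ne_top,
        lintegral_add_left (measurable_one.indicator measurableSet_Iio),
        lintegral_indicator_one measurableSet_Iio, Measure.restrict_apply measurableSet_Iio,
        Iio_inter_Ioi]
    _ = ENNReal.ofReal ℓ * (ENNReal.ofReal (g 0) + ∫⁻ σ in Ici 0, ENNReal.ofReal (g σ)) := by
      rw [Real.volume_Ioo, sub_zero, layer_cake]

lemma setLIntegral_Ici_comp_add_left (f : ℝ → ENNReal) (s : ℝ) :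
    ∫⁻ σ in Ici 0, f (s + σ) = ∫⁻ u in Ici s, f u := by
  have := (measurePreserving_add_left volume s).setLIntegral_comp_preimage_emb
    (measurableEmbedding_addLeft s) f (Ici s)
  rwa [preimage_const_add_Ici, sub_self] at this

theorem stmt_4_general (h : ℝ → ℝ) (hnn : ∀ t, 0 ≤ t → 0 ≤ h t)
    (hanti : AntitoneOn h (Set.Ici 0))
    (hint : IntegrableOn h (Set.Ioi 0))
    (μ : Measure ℝ)
    (ℓ : ℝ) (hℓ : 0 < ℓ)
    (hμ : ∀ σ : ℝ, 0 ≤ σ → μ (Set.Icc 0 σ) ≤ ENNReal.ofReal (ℓ * (1 + σ)))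
    (s : ℝ) (hs : 0 ≤ s) :
    ∫⁻ σ in Set.Ici (0 : ℝ), ENNReal.ofReal (h (s + σ)) ∂μ ≤
      ENNReal.ofReal (ℓ * h s + ℓ * ∫ u in Set.Ioi s, h u) := by
  have h_tail_nonneg : 0 ≤ᵐ[volume.restrict (Ioi s)] h :=
    (ae_restrict_iff' measurableSet_Ioi).2 (.of_forall fun u hu => hnn u (hs.trans hu.le))
  have h_tail : ∫⁻ σ in Ici 0, ENNReal.ofReal (h (s + σ)) =
      ENNReal.ofReal (∫ u in Ioi s, h u) := by
    rw [setLIntegral_Ici_comp_add_left (fun u => ENNReal.ofReal (h u)),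
      ← setLIntegral_congr Ioi_ae_eq_Ici,
      ofReal_integral_eq_lintegral_ofReal (hint.mono_set (Ioi_subset_Ioi hs)) h_tail_nonneg]
  have key := setLIntegral_Ici_le_of_antitoneOn hℓ hμ (g := fun σ => h (s + σ))
    (fun σ hσ => hnn _ (add_nonneg hs hσ))
    (fun a ha b hb hab => hanti (add_nonneg hs ha) (add_nonneg hs hb) (add_le_add_right hab s))
  rw [add_zero, h_tail] at key
  rwa [← ENNReal.ofReal_add (hnn s hs) (integral_nonneg_of_ae h_tail_nonneg),
    ← ENNReal.ofReal_mul hℓ.le, mul_add] at key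

/-- If `h : [0,∞) → [0,∞)` is nonincreasing and integrable, and `μ` is a locally finite
Borel measure on `[0,∞)` with `μ [0,σ] ≤ ℓ(1+σ)` for all `σ ≥ 0`, then for every `s ≥ 0`,
`∫ h(s+σ) dμ(σ) ≤ ℓ h(s) + ℓ ∫_s^∞ h(u) du`. -/
theorem stmt_4 (h : ℝ → ℝ) (hnn : ∀ t, 0 ≤ t → 0 ≤ h t)
    (hanti : AntitoneOn h (Set.Ici 0))
    (hint : IntegrableOn h (Set.Ioi 0))
    (μ : Measure ℝ) [IsLocallyFiniteMeasure μ]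
    (ℓ : ℝ) (hℓ : 0 < ℓ)
    (hμ : ∀ σ : ℝ, 0 ≤ σ → μ (Set.Icc 0 σ) ≤ ENNReal.ofReal (ℓ * (1 + σ)))
    (s : ℝ) (hs : 0 ≤ s) :
    ∫⁻ σ in Set.Ici (0 : ℝ), ENNReal.ofReal (h (s + σ)) ∂μ ≤
      ENNReal.ofReal (ℓ * h s + ℓ * ∫ u in Set.Ioi s, h u) :=
  stmt_4_general h hnn hanti hint μ ℓ hℓ hμ s hs
end

section
/- Let ν > 0 and 0 ≤ m < 1, and define I : [0,∞) → ℝ by I(x) = x·log(x/(ν + x·m)) − x + x·m + ν for x > 0 and I(0) = ν. Then I(x) ≥ 0 for all x ≥ 0, I is convex on [0,∞), and I(x) = 0 if and only if x = ν/(1−m). -/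
/-!
Writing `b(x) = ν + x m`, the rate function is `I(x) = b(x) · φ(x / b(x))` with
`φ(y) = y log y - y + 1` (`InformationTheory.klFun`).
Nonnegativity and the zero set come from `φ ≥ 0` with `φ(y) = 0 ↔ y = 1`, and `x = b(x)` means
`x = ν/(1 - m)`. Convexity holds because `(x, t) ↦ t φ(x / t)` is the perspective of the convex
function `φ`, and `x ↦ (x, b(x))` is affine.
-/

open Real Set InformationTheory

section Perspective

variable {E : Type*} [AddCommGroup E] [Module ℝ E]

theorem ConvexOn.perspective {s : Set E} {f : E → ℝ} (hf : ConvexOn ℝ s f) :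
    ConvexOn ℝ {p : E × ℝ | 0 < p.2 ∧ p.2⁻¹ • p.1 ∈ s} (fun p => p.2 * f (p.2⁻¹ • p.1)) := by
  -- `(a x₁ + b x₂) / (a t₁ + b t₂)` is the convex combination of `xᵢ / tᵢ` with weights
  -- proportional to `a t₁` and `b t₂`.
  have key : ∀ ⦃p q : E × ℝ⦄, 0 < p.2 → 0 < q.2 → ∀ ⦃a b : ℝ⦄, 0 ≤ a → 0 ≤ b → a + b = 1 →
      (a • p + b • q).2⁻¹ • (a • p + b • q).1 =
        (a * p.2 / (a • p + b • q).2) • (p.2⁻¹ • p.1) +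
          (b * q.2 / (a • p + b • q).2) • (q.2⁻¹ • q.1) := by
    intro p q hp hq a b _ _ _
    simp only [Prod.fst_add, Prod.snd_add, Prod.smul_fst, Prod.smul_snd, smul_eq_mul, smul_smul,
      smul_add]
    congr 2 <;> field_simp
  have weights : ∀ ⦃p q : E × ℝ⦄, 0 < p.2 → 0 < q.2 → ∀ ⦃a b : ℝ⦄, 0 ≤ a → 0 ≤ b → a + b = 1 →
      0 < (a • p + b • q).2 ∧ 0 ≤ a * p.2 / (a • p + b • q).2 ∧ 0 ≤ b * q.2 / (a • p + b • q).2 ∧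
        a * p.2 / (a • p + b • q).2 + b * q.2 / (a • p + b • q).2 = 1 := by
    intro p q hp hq a b ha hb hab
    have ht : 0 < (a • p + b • q).2 := convex_Ioi (0 : ℝ) hp hq ha hb hab
    refine ⟨ht, by positivity, by positivity, ?_⟩
    rw [← add_div, div_eq_one_iff_eq ht.ne']
    simp
  refine ⟨fun p ⟨hp, hps⟩ q ⟨hq, hqs⟩ a b ha hb hab => ?_,
    fun p ⟨hp, hps⟩ q ⟨hq, hqs⟩ a b ha hb hab => ?_⟩
  · obtain ⟨ht, hα, hβ, hαβ⟩ := weights hp hq ha hb hab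
    exact ⟨ht, key hp hq ha hb hab ▸ hf.1 hps hqs hα hβ hαβ⟩
  · obtain ⟨ht, hα, hβ, hαβ⟩ := weights hp hq ha hb hab
    set t := (a • p + b • q).2
    calc t * f (t⁻¹ • (a • p + b • q).1)
        ≤ t * ((a * p.2 / t) • f (p.2⁻¹ • p.1) + (b * q.2 / t) • f (q.2⁻¹ • q.1)) := by
          rw [key hp hq ha hb hab]
          exact mul_le_mul_of_nonneg_left (hf.2 hps hqs hα hβ hαβ) ht.le
      _ = a • (p.2 * f (p.2⁻¹ • p.1)) + b • (q.2 * f (q.2⁻¹ • q.1)) := by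
          simp only [smul_eq_mul]
          field_simp

end Perspective

theorem mul_klFun_div (a : ℝ) {b : ℝ} (hb : b ≠ 0) :
    b * klFun (a / b) = a * log (a / b) - a + b := by
  rw [klFun_apply]
  field_simp
  ring

noncomputable def hawkesRate (ν m x : ℝ) : ℝ :=
  (ν + x * m) * klFun (x / (ν + x * m))

section HawkesRate

variable {ν m x : ℝ}

theorem hawkesRate_eq (h : ν + x * m ≠ 0) :
    hawkesRate ν m x = x * log (x / (ν + x * m)) - x + x * m + ν := by
  rw [hawkesRate, mul_klFun_div x h]
  ring

theorem hawkesRate_nonneg (hν : 0 < ν) (hm : 0 ≤ m) (hx : 0 ≤ x) : 0 ≤ hawkesRate ν m x :=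
  have hb : 0 < ν + x * m := by positivity
  mul_nonneg hb.le (klFun_nonneg (div_nonneg hx hb.le))

theorem hawkesRate_eq_zero_iff (hν : 0 < ν) (hm : 0 ≤ m) (hm1 : m ≠ 1) (hx : 0 ≤ x) :
    hawkesRate ν m x = 0 ↔ x = ν / (1 - m) := by
  have hb : 0 < ν + x * m := by positivity
  have h1m : 1 - m ≠ 0 := sub_ne_zero.mpr hm1.symm
  rw [hawkesRate, mul_eq_zero, or_iff_right hb.ne', klFun_eq_zero_iff (div_nonneg hx hb.le),
    div_eq_one_iff_eq hb.ne', eq_div_iff h1m]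
  constructor <;> intro h <;> linarith

theorem convexOn_hawkesRate (hν : 0 < ν) (hm : 0 ≤ m) : ConvexOn ℝ (Ici 0) (hawkesRate ν m) := by
  let toGraph : ℝ →ᵃ[ℝ] ℝ × ℝ := AffineMap.lineMap (0, ν) (1, ν + m)
  have htoGraph (x : ℝ) : toGraph x = (x, ν + x * m) := by
    ext <;> simp [toGraph, AffineMap.lineMap_apply, add_comm, mul_comm]
  have hconv := (convexOn_klFun.perspective.comp_affineMap toGraph).subset
    (fun x (hx : 0 ≤ x) => ?_) (convex_Ici 0)
  · refine hconv.congr fun x _ => ?_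
    simp [htoGraph, hawkesRate, div_eq_inv_mul]
  · have hb : 0 < ν + x * m := by positivity
    simp only [mem_preimage, htoGraph, mem_ofPred_eq, mem_Ici, smul_eq_mul]
    exact ⟨hb, by positivity⟩

end HawkesRate

/-- The Bordenave–Torrisi rate function `I(x) = x log(x/(ν+xm)) − x + xm + ν` (with
`I(0) = ν`) is nonnegative on `[0,∞)`, convex on `[0,∞)`, and vanishes exactly at
`x = ν/(1−m)`. -/
theorem stmt_7 (ν m : ℝ) (hν : 0 < ν) (hm0 : 0 ≤ m) (hm1 : m < 1)
    (I : ℝ → ℝ) (hI0 : I 0 = ν)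
    (hIpos : ∀ x : ℝ, 0 < x →
      I x = x * Real.log (x / (ν + x * m)) - x + x * m + ν) :
    (∀ x : ℝ, 0 ≤ x → 0 ≤ I x) ∧
    ConvexOn ℝ (Set.Ici 0) I ∧
    (∀ x : ℝ, 0 ≤ x → (I x = 0 ↔ x = ν / (1 - m))) := by
  have hI : EqOn (hawkesRate ν m) I (Ici 0) := by
    intro x (hx : 0 ≤ x)
    rw [hawkesRate_eq (by positivity)]
    rcases hx.eq_or_lt with rfl | hx
    · simp [hI0]
    · exact (hIpos x hx).symm
  refine ⟨fun x hx => ?_, (convexOn_hawkesRate hν hm0).congr hI, fun x hx => ?_⟩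
  · exact hI hx ▸ hawkesRate_nonneg hν hm0 hx
  · exact hI hx ▸ hawkesRate_eq_zero_iff hν hm0 hm1.ne hx
end

section
/- Let 0 < α < β and ν > 0. Set h(t) = α·e^{−βt}, μ̄ = ν·β/(β−α), and μ(τ) = (ν·α·β·(2β−α)/(2(β−α)²))·e^{−(β−α)τ} for τ > 0. Then μ satisfies the integral equation μ(τ) = μ̄·h(τ) + ∫₀^∞ h(τ+v)·μ(v) dv + ∫₀^τ h(τ−v)·μ(v) dv for all τ > 0. -/
open MeasureTheory Real

/-!
For an exponential kernel `a e^{-b t}` and `μ(v) = C e^{-c v}` both integrands are single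
exponentials in `v`: the tail integral is `a C e^{-b τ} / (b + c)` and the convolution integral is
`a C (e^{-c τ} - e^{-b τ}) / (b - c)`. With `c = β - α` the convolution term reproduces
`μ(τ)` up to a multiple of `e^{-βτ}`, and the stated value of `C` is exactly the one for which
the `e^{-βτ}` terms cancel.
-/

theorem intervalIntegral_exp_mul_zero (c τ : ℝ) (hc : c ≠ 0) :
    ∫ v in (0 : ℝ)..τ, exp (c * v) = (exp (c * τ) - 1) / c := by
  rw [intervalIntegral.integral_comp_mul_left exp hc, integral_exp, mul_zero, exp_zero,
    smul_eq_mul, inv_mul_eq_div]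

theorem setIntegral_Ioi_exp_kernel_shift_mul_exp (a b c C τ : ℝ) (hbc : 0 < b + c) :
    ∫ v in Set.Ioi (0 : ℝ), a * exp (-b * (τ + v)) * (C * exp (-c * v)) =
      a * C * exp (-b * τ) / (b + c) := by
  have hprod : ∀ v, a * exp (-b * (τ + v)) * (C * exp (-c * v)) =
      a * C * exp (-b * τ) * exp (-(b + c) * v) := fun v => by
    have hexp : exp (-b * (τ + v)) * exp (-c * v) = exp (-b * τ) * exp (-(b + c) * v) := by
      rw [← exp_add, ← exp_add]; ring_nf
    linear_combination a * C * hexp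
  simp_rw [hprod]
  rw [integral_const_mul, integral_exp_mul_Ioi (by linarith), mul_zero, exp_zero]
  field_simp

theorem intervalIntegral_exp_kernel_conv_exp (a b c C τ : ℝ) (hbc : b ≠ c) :
    ∫ v in (0 : ℝ)..τ, a * exp (-b * (τ - v)) * (C * exp (-c * v)) =
      a * C * (exp (-c * τ) - exp (-b * τ)) / (b - c) := by
  have hprod : ∀ v, a * exp (-b * (τ - v)) * (C * exp (-c * v)) =
      a * C * exp (-b * τ) * exp ((b - c) * v) := fun v => by
    have hexp : exp (-b * (τ - v)) * exp (-c * v) = exp (-b * τ) * exp ((b - c) * v) := by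
      rw [← exp_add, ← exp_add]; ring_nf
    linear_combination a * C * hexp
  simp_rw [hprod]
  rw [intervalIntegral.integral_const_mul, intervalIntegral_exp_mul_zero _ _ (sub_ne_zero.2 hbc),
    show -c * τ = (b - c) * τ + -b * τ by ring, exp_add]
  ring

theorem stmt_14_general (α β ν : ℝ) (hα : 0 < α) (hαβ : α < β)
    (h : ℝ → ℝ) (hh : ∀ t, h t = α * Real.exp (-β * t))
    (μbar : ℝ) (hμbar : μbar = ν * β / (β - α))
    (μ : ℝ → ℝ)
    (hμ : ∀ τ, μ τ = ν * α * β * (2 * β - α) / (2 * (β - α) ^ 2) *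
      Real.exp (-(β - α) * τ)) :
    ∀ τ : ℝ, 0 < τ →
      μ τ = μbar * h τ + (∫ v in Set.Ioi (0:ℝ), h (τ + v) * μ v) +
        ∫ v in (0:ℝ)..τ, h (τ - v) * μ v := by
  intro τ _
  obtain rfl : h = fun t => α * exp (-β * t) := funext hh
  obtain rfl : μ = fun v => ν * α * β * (2 * β - α) / (2 * (β - α) ^ 2) *
      exp (-(β - α) * v) := funext hμ
  set C := ν * α * β * (2 * β - α) / (2 * (β - α) ^ 2) with hC
  have hcoeff : μbar * α + α * C / (2 * β - α) = C := by
    have hβα : β - α ≠ 0 := by linarith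
    -- `field_simp` does not cancel the factor `2 * β - α` of `C`, so it is cancelled first
    rw [mul_div_assoc, hC, div_div, mul_div_mul_right _ _ (by linarith), hμbar]
    field_simp
    ring
  rw [setIntegral_Ioi_exp_kernel_shift_mul_exp _ _ _ _ _ (by linarith),
    intervalIntegral_exp_kernel_conv_exp _ _ _ _ _ (by linarith),
    show β + (β - α) = 2 * β - α by ring, show β - (β - α) = α by ring,
    mul_assoc α C (_ - _), mul_div_cancel_left₀ _ hα.ne']
  linear_combination (-exp (-β * τ)) * hcoeff

/-- For `0 < α < β`, `ν > 0`, with `h(t) = α e^{−βt}`, `μ̄ = νβ/(β−α)` and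
`μ(τ) = (ναβ(2β−α)/(2(β−α)²)) e^{−(β−α)τ}`, the covariance equation
`μ(τ) = μ̄ h(τ) + ∫₀^∞ h(τ+v) μ(v) dv + ∫₀^τ h(τ−v) μ(v) dv` holds for all `τ > 0`. -/
theorem stmt_14 (α β ν : ℝ) (hα : 0 < α) (hαβ : α < β) (hν : 0 < ν)
    (h : ℝ → ℝ) (hh : ∀ t, h t = α * Real.exp (-β * t))
    (μbar : ℝ) (hμbar : μbar = ν * β / (β - α))
    (μ : ℝ → ℝ)
    (hμ : ∀ τ, μ τ = ν * α * β * (2 * β - α) / (2 * (β - α) ^ 2) *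
      Real.exp (-(β - α) * τ)) :
    ∀ τ : ℝ, 0 < τ →
      μ τ = μbar * h τ + (∫ v in Set.Ioi (0:ℝ), h (τ + v) * μ v) +
        ∫ v in (0:ℝ)..τ, h (τ - v) * μ v :=
  stmt_14_general α β ν hα hαβ h hh μbar hμbar μ hμ
end

section
/- Let ψ : [0,∞) → [0,∞) be concave and nondecreasing, let a, ν > 0, and define λ(z) = z − ψ(z) + ν (assumed nonnegative). Define the generator A f(z) = −a·z·f'(z) + λ(z)·(f(z+a) − f(z)), and let V(z) = z + 1 and φ(v) = a·(ψ(v) − ψ(0)). Then for all z ≥ 0, A V(z) + φ(V(z)) ≤ a·ψ(1) − 2a·ψ(0) + a·ν. -/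
/-!
The generator kills the linear part of `λ`: since `V' = 1` and `V(z + a) - V(z) = a`,
`A V(z) = -a z + a λ(z) = a (ν - ψ z)`. Adding `φ (V z) = a (ψ (z + 1) - ψ 0)`, the claim reduces
to `ψ (z + 1) - ψ z ≤ ψ 1 - ψ 0`: increments of a concave function over intervals of fixed length
decrease as the interval moves right.
-/

theorem ConcaveOn.add_le_add_of_le_of_add_eq {𝕜 : Type*} [Field 𝕜] [LinearOrder 𝕜]
    [IsStrictOrderedRing 𝕜] {s : Set 𝕜} {f : 𝕜 → 𝕜} (hf : ConcaveOn 𝕜 s f) {p q u v : 𝕜}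
    (hp : p ∈ s) (hq : q ∈ s) (hu : p ≤ u) (hv : p ≤ v) (huv : u + v = p + q) :
    f p + f q ≤ f u + f v := by
  rcases (show p ≤ q by linarith).eq_or_lt with rfl | hpq
  · obtain rfl : u = p := by linarith
    obtain rfl : v = u := by linarith
    rfl
  set t := (u - p) / (q - p)
  have ht₀ : 0 ≤ t := div_nonneg (by linarith) (by linarith)
  have ht₁ : 0 ≤ 1 - t := by
    rw [sub_nonneg, div_le_one (by linarith)]
    linarith
  have hu_eq : (1 - t) * p + t * q = u := by
    simp only [t]
    field_simp [(sub_pos.mpr hpq).ne']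
    ring
  -- `u` and `v` split `[p, q]` with mirrored barycentric weights.
  have hfu := hf.2 hp hq ht₁ ht₀ (by ring)
  have hfv := hf.2 hp hq ht₀ ht₁ (by ring)
  simp only [smul_eq_mul] at hfu hfv
  rw [hu_eq] at hfu
  rw [show t * p + (1 - t) * q = v by linear_combination -huv - hu_eq] at hfv
  linarith

theorem stmt_18_general (ψ : ℝ → ℝ)
    (hψconc : ConcaveOn ℝ (Set.Ici 0) ψ)
    (a ν : ℝ) (ha : 0 < a)
    (lam : ℝ → ℝ) (hlam : ∀ z, lam z = z - ψ z + ν)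
    (V : ℝ → ℝ) (hV : ∀ z, V z = z + 1)
    (φ : ℝ → ℝ) (hφ : ∀ v, φ v = a * (ψ v - ψ 0))
    (AV : ℝ → ℝ)
    (hAV : ∀ z, AV z = -a * z * deriv V z + lam z * (V (z + a) - V z)) :
    ∀ z : ℝ, 0 ≤ z → AV z + φ (V z) ≤ a * ψ 1 - 2 * a * ψ 0 + a * ν := by
  intro z hz
  have hV' : deriv V z = 1 := by simp [funext hV]
  have drift : AV z = a * (ν - ψ z) := by
    rw [hAV, hV', hlam, hV, hV]
    ring
  have increment : ψ 0 + ψ (z + 1) ≤ ψ z + ψ 1 :=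
    hψconc.add_le_add_of_le_of_add_eq Set.self_mem_Ici (Set.mem_Ici.mpr (by linarith)) hz
      zero_le_one (by ring)
  rw [drift, hφ, hV]
  linarith [mul_le_mul_of_nonneg_left increment ha.le]

/-- Lyapunov drift estimate for the critical Markovian Hawkes process: with
`ψ : [0,∞) → [0,∞)` concave nondecreasing, `λ(z) = z − ψ(z) + ν ≥ 0`,
generator `A f(z) = −a z f'(z) + λ(z)(f(z+a) − f(z))`, `V(z) = z+1` and
`φ(v) = a(ψ(v) − ψ(0))`, one has `A V(z) + φ(V(z)) ≤ a ψ(1) − 2a ψ(0) + a ν`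
for all `z ≥ 0`. -/
theorem stmt_18 (ψ : ℝ → ℝ) (hψnn : ∀ z : ℝ, 0 ≤ z → 0 ≤ ψ z)
    (hψconc : ConcaveOn ℝ (Set.Ici 0) ψ) (hψmono : MonotoneOn ψ (Set.Ici 0))
    (a ν : ℝ) (ha : 0 < a) (hν : 0 < ν)
    (lam : ℝ → ℝ) (hlam : ∀ z, lam z = z - ψ z + ν)
    (hlamnn : ∀ z : ℝ, 0 ≤ z → 0 ≤ lam z)
    (V : ℝ → ℝ) (hV : ∀ z, V z = z + 1)
    (φ : ℝ → ℝ) (hφ : ∀ v, φ v = a * (ψ v - ψ 0))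
    (AV : ℝ → ℝ)
    (hAV : ∀ z, AV z = -a * z * deriv V z + lam z * (V (z + a) - V z)) :
    ∀ z : ℝ, 0 ≤ z → AV z + φ (V z) ≤ a * ψ 1 - 2 * a * ψ 0 + a * ν :=
  stmt_18_general ψ hψconc a ν ha lam hlam V hV φ hφ AV hAV
end
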